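/- arXiv:2208.10005 — 4 statements merged into one kernel-verified Lean document; each statement's English description precedes it below -/
import Mathlib

section
/- Define r(A,B) = (1/2)(⟨[B,A], BA⟩ + ⟨[B,A*], B A*⟩) with real part taken implicitly via the Hilbert–Schmidt inner product; then for all n×n complex matrices A, B, Re r(A,B) ≤ ((1+√2)/2)‖A‖²‖B‖². -/
open Matrix Complex BigOperators

/-- Squared Frobenius (Hilbert-Schmidt) norm: ‖X‖² = tr(X*X). -/
noncomputable def frobSq {n : ℕ} (X : Matrix (Fin n) (Fin n) ℂ) : ℝ :=
  (Matrix.trace (Xᴴ * X)).re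

/-- Hilbert-Schmidt inner product ⟨X,Y⟩ = tr(X*Y). -/
noncomputable def hsInner {n : ℕ} (X Y : Matrix (Fin n) (Fin n) ℂ) : ℂ :=
  Matrix.trace (Xᴴ * Y)

/-- f(A,B;q) = Re⟨[B,A],[B,A]_q⟩ where [X,Y]_q = XY − qYX. -/
noncomputable def fFun {n : ℕ} (A B : Matrix (Fin n) (Fin n) ℂ) (q : ℝ) : ℝ :=
  (hsInner (B * A - A * B) (B * A - (q : ℂ) • (A * B))).re

/-- r(A,B) = (1/2)(⟨[B,A],BA⟩ + ⟨[B,A*],BA*⟩). -/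
noncomputable def rFun {n : ℕ} (A B : Matrix (Fin n) (Fin n) ℂ) : ℂ :=
  (1/2 : ℂ) * (hsInner (B * A - A * B) (B * A) + hsInner (B * Aᴴ - Aᴴ * B) (B * Aᴴ))

/-- c(q) = ((1+q) + √(2(1+q²)))/2. -/
noncomputable def cq (q : ℝ) : ℝ := ((1 + q) + Real.sqrt (2 * (1 + q ^ 2))) / 2

/-!
Write `A = H + iK` with `H, K` Hermitian. Sesquilinearity makes the cross terms cancel, so
`r(A,B) = ⟨[B,H],BH⟩ + ⟨[B,K],BK⟩` while `‖A‖² = ‖H‖² + ‖K‖²`; it thus suffices to bound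
`Re ⟨[B,X],BX⟩` for Hermitian `X`. Both sides are invariant under unitary conjugation, so we may
take `X = diag(d)`, and then `Re ⟨[B,X],BX⟩ = ∑ᵢⱼ |Bᵢⱼ|² dⱼ(dⱼ - dᵢ)`. Each weight satisfies
`dⱼ(dⱼ - dᵢ) ≤ (1+√2)/2 (dᵢ² + dⱼ²) ≤ (1+√2)/2 ‖X‖²`.
-/

open ComplexConjugate Unitary

lemma Matrix.trace_conjStarAlgAut {m R : Type*} [Fintype m] [DecidableEq m] [CommRing R]
    [StarRing R] (u : unitaryGroup m R) (X : Matrix m m R) :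
    trace (conjStarAlgAut R _ u X) = trace X := by
  rw [conjStarAlgAut_apply, trace_mul_cycle, coe_star_mul_self, Matrix.one_mul]

section

variable {n : ℕ}

lemma hsInner_eq_sum (X Y : Matrix (Fin n) (Fin n) ℂ) :
    hsInner X Y = ∑ i, ∑ j, conj (X i j) * Y i j := by
  rw [hsInner, Matrix.trace, Finset.sum_comm]
  simp [Matrix.mul_apply]

lemma hsInner_conjStarAlgAut (u : unitaryGroup (Fin n) ℂ) (X Y : Matrix (Fin n) (Fin n) ℂ) :
    hsInner (conjStarAlgAut ℂ _ u X) (conjStarAlgAut ℂ _ u Y) = hsInner X Y := by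
  rw [hsInner, hsInner, ← star_eq_conjTranspose, ← map_star, ← map_mul, trace_conjStarAlgAut,
    star_eq_conjTranspose]

lemma frobSq_eq_sum_normSq (X : Matrix (Fin n) (Fin n) ℂ) :
    frobSq X = ∑ i, ∑ j, normSq (X i j) := by
  rw [frobSq, ← hsInner, hsInner_eq_sum]
  simp only [re_sum, ← normSq_eq_conj_mul_self, ofReal_re]

lemma frobSq_diagonal_ofReal (d : Fin n → ℝ) :
    frobSq (diagonal fun i => (d i : ℂ)) = ∑ i, d i ^ 2 := by
  simp [frobSq_eq_sum_normSq, diagonal_apply, apply_ite, sq]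

lemma frobSq_conjStarAlgAut (u : unitaryGroup (Fin n) ℂ) (X : Matrix (Fin n) (Fin n) ℂ) :
    frobSq (conjStarAlgAut ℂ _ u X) = frobSq X :=
  congrArg re (hsInner_conjStarAlgAut u X X)

lemma frobSq_add_I_smul {H K : Matrix (Fin n) (Fin n) ℂ} (hH : H.IsHermitian)
    (hK : K.IsHermitian) : frobSq (H + I • K) = frobSq H + frobSq K := by
  simp only [frobSq, ← add_re, conjTranspose_add, conjTranspose_smul, hH.eq, hK.eq, star_def,
    conj_I, add_mul, mul_add, smul_mul_assoc, mul_smul_comm, trace_add, trace_smul, smul_eq_mul,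
    trace_mul_comm K H]
  ring_nf
  simp [I_sq]

/-- `rFun A B = (commInner A B + commInner Aᴴ B) / 2`. -/
noncomputable def commInner (A B : Matrix (Fin n) (Fin n) ℂ) : ℂ :=
  hsInner (B * A - A * B) (B * A)

lemma commInner_conjStarAlgAut (u : unitaryGroup (Fin n) ℂ) (X B : Matrix (Fin n) (Fin n) ℂ) :
    commInner (conjStarAlgAut ℂ _ u X) (conjStarAlgAut ℂ _ u B) = commInner X B := by
  simp only [commInner, ← map_mul, ← map_sub, hsInner_conjStarAlgAut]

lemma rFun_add_I_smul {H K : Matrix (Fin n) (Fin n) ℂ} (hH : H.IsHermitian)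
    (hK : K.IsHermitian) (B : Matrix (Fin n) (Fin n) ℂ) :
    rFun (H + I • K) B = commInner H B + commInner K B := by
  simp only [rFun, commInner, hsInner, conjTranspose_add, conjTranspose_smul, conjTranspose_sub,
    conjTranspose_mul, conjTranspose_neg, hH.eq, hK.eq, star_def, conj_I, add_mul, mul_add,
    sub_mul, mul_sub, smul_mul_assoc, mul_smul_comm, smul_add, smul_sub, trace_add, trace_sub,
    trace_smul, smul_eq_mul, Matrix.mul_assoc, neg_smul, trace_neg, neg_mul, mul_neg]
  ring_nf
  simp only [I_sq]
  ring

/-- `(1 + √2) / 2` is the largest eigenvalue of the quadratic form `y² - xy`. -/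
lemma mul_sub_le_sqrt_two (x y : ℝ) : y * (y - x) ≤ (1 + √2) / 2 * (x ^ 2 + y ^ 2) := by
  have h2 : √2 ^ 2 = 2 := Real.sq_sqrt (by norm_num)
  nlinarith [sq_nonneg ((1 + √2) * x + y), Real.sqrt_nonneg 2]

lemma mul_sub_le_sum_sq {ι : Type*} [Fintype ι] (d : ι → ℝ) (i j : ι) :
    d j * (d j - d i) ≤ (1 + √2) / 2 * ∑ k, d k ^ 2 := by
  classical
  rcases eq_or_ne i j with rfl | hij
  · rw [sub_self, mul_zero]
    positivity
  · have hpair : d i ^ 2 + d j ^ 2 ≤ ∑ k, d k ^ 2 := by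
      rw [← Finset.sum_pair hij (f := fun k => d k ^ 2)]
      exact Finset.sum_le_univ_sum_of_nonneg fun k => sq_nonneg (d k)
    calc d j * (d j - d i) ≤ (1 + √2) / 2 * (d i ^ 2 + d j ^ 2) := mul_sub_le_sqrt_two _ _
      _ ≤ (1 + √2) / 2 * ∑ k, d k ^ 2 := by gcongr

lemma re_commInner_diagonal (d : Fin n → ℝ) (M : Matrix (Fin n) (Fin n) ℂ) :
    (commInner (diagonal fun i => (d i : ℂ)) M).re
      = ∑ i, ∑ j, normSq (M i j) * (d j * (d j - d i)) := by
  simp only [commInner, hsInner_eq_sum, re_sum, Matrix.sub_apply, mul_diagonal, diagonal_mul]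
  refine Finset.sum_congr rfl fun i _ => Finset.sum_congr rfl fun j _ => ?_
  have hterm : conj (M i j * d j - d i * M i j) * (M i j * d j)
      = ((normSq (M i j) * (d j * (d j - d i)) : ℝ) : ℂ) := by
    push_cast
    rw [normSq_eq_conj_mul_self, map_sub, map_mul, map_mul, conj_ofReal, conj_ofReal]
    ring
  rw [hterm, ofReal_re]

lemma re_commInner_diagonal_le (d : Fin n → ℝ) (M : Matrix (Fin n) (Fin n) ℂ) :
    (commInner (diagonal fun i => (d i : ℂ)) M).re
      ≤ (1 + √2) / 2 * (∑ k, d k ^ 2) * frobSq M := by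
  rw [re_commInner_diagonal, frobSq_eq_sum_normSq, Finset.mul_sum]
  refine Finset.sum_le_sum fun i _ => ?_
  rw [Finset.mul_sum]
  refine Finset.sum_le_sum fun j _ => ?_
  rw [mul_comm]
  exact mul_le_mul_of_nonneg_right (mul_sub_le_sum_sq d i j) (normSq_nonneg _)

lemma re_commInner_le_of_isHermitian {X : Matrix (Fin n) (Fin n) ℂ} (hX : X.IsHermitian)
    (B : Matrix (Fin n) (Fin n) ℂ) :
    (commInner X B).re ≤ (1 + √2) / 2 * frobSq X * frobSq B := by
  obtain ⟨u, d, rfl⟩ : ∃ (u : unitaryGroup (Fin n) ℂ) (d : Fin n → ℝ),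
      X = conjStarAlgAut ℂ _ u (diagonal fun i => (d i : ℂ)) :=
    ⟨hX.eigenvectorUnitary, hX.eigenvalues, hX.spectral_theorem⟩
  obtain ⟨M, rfl⟩ : ∃ M, B = conjStarAlgAut ℂ _ u M :=
    ⟨_, ((conjStarAlgAut ℂ _ u).apply_symm_apply B).symm⟩
  rw [commInner_conjStarAlgAut, frobSq_conjStarAlgAut, frobSq_conjStarAlgAut,
    frobSq_diagonal_ofReal]
  exact re_commInner_diagonal_le d M

end

theorem r_sharp_bound (n : ℕ) (A B : Matrix (Fin n) (Fin n) ℂ) :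
    (rFun A B).re ≤ ((1 + Real.sqrt 2) / 2) * frobSq A * frobSq B := by
  obtain ⟨H, K, hH, hK, rfl⟩ :
      ∃ H K : Matrix (Fin n) (Fin n) ℂ, H.IsHermitian ∧ K.IsHermitian ∧ A = H + I • K :=
    ⟨realPart A, imaginaryPart A, (realPart A).2.isHermitian, (imaginaryPart A).2.isHermitian,
      (realPart_add_I_smul_imaginaryPart A).symm⟩
  rw [rFun_add_I_smul hH hK, add_re, frobSq_add_I_smul hH hK]
  calc (commInner H B).re + (commInner K B).re
      ≤ (1 + √2) / 2 * frobSq H * frobSq B + (1 + √2) / 2 * frobSq K * frobSq B :=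
        add_le_add (re_commInner_le_of_isHermitian hH B) (re_commInner_le_of_isHermitian hK B)
    _ = (1 + √2) / 2 * (frobSq H + frobSq K) * frobSq B := by ring
end

section
/- If B is a normal n×n complex matrix, then r(A,B) = (1/2)‖[A,B]‖² for every n×n complex matrix A. -/
open Matrix Complex BigOperators

/-! With `C = BA - AB`, linearity gives `⟨C, BA⟩ - ⟨C, AB⟩ = ‖C‖²`, so it suffices that
`⟨[B, A*], BA*⟩ = -⟨C, AB⟩`. Expanding both sides and cycling traces, they differ only in
`tr (A*A B*B)` versus `tr (A*A BB*)`, which agree exactly because `B` is normal. -/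

section

variable {m R : Type*} [Fintype m] [CommRing R] [StarRing R] (A B : Matrix m m R)

theorem trace_commutator_conjTranspose_of_normal (hB : B * Bᴴ = Bᴴ * B) :
    trace ((B * Aᴴ - Aᴴ * B)ᴴ * (B * Aᴴ)) = -trace ((B * A - A * B)ᴴ * (A * B)) := by
  have h₁ : trace (A * Bᴴ * (B * Aᴴ)) = trace (Bᴴ * Aᴴ * (A * B)) :=
    calc trace (A * Bᴴ * (B * Aᴴ)) = trace (A * (Bᴴ * B) * Aᴴ) := by simp only [Matrix.mul_assoc]
      _ = trace (Aᴴ * A * (Bᴴ * B)) := trace_mul_cycle _ _ _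
      _ = trace (Aᴴ * A * B * Bᴴ) := by rw [← hB]; simp only [Matrix.mul_assoc]
      _ = trace (Bᴴ * Aᴴ * (A * B)) := by rw [trace_mul_cycle]; simp only [Matrix.mul_assoc]
  have h₂ : trace (Bᴴ * A * (B * Aᴴ)) = trace (Aᴴ * Bᴴ * (A * B)) := by
    rw [← Matrix.mul_assoc, trace_mul_comm]; simp only [Matrix.mul_assoc]
  simp only [conjTranspose_sub, conjTranspose_mul, conjTranspose_conjTranspose, Matrix.sub_mul,
    trace_sub, h₁, h₂]
  abel

end

section

variable {n : ℕ}

theorem hsInner_sub_right (X Y Z : Matrix (Fin n) (Fin n) ℂ) :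
    hsInner X (Y - Z) = hsInner X Y - hsInner X Z := by
  simp only [hsInner, Matrix.mul_sub, trace_sub]

theorem hsInner_self (X : Matrix (Fin n) (Fin n) ℂ) : hsInner X X = frobSq X := by
  have : star (trace (Xᴴ * X)) = trace (Xᴴ * X) := by
    rw [← trace_conjTranspose, conjTranspose_mul, conjTranspose_conjTranspose]
  exact (Complex.conj_eq_iff_re.mp this).symm

theorem frobSq_neg (X : Matrix (Fin n) (Fin n) ℂ) : frobSq (-X) = frobSq X := by
  rw [frobSq, frobSq, conjTranspose_neg, neg_mul_neg]

end

theorem r_eq_half_comm_sq_of_normal (n : ℕ) (A B : Matrix (Fin n) (Fin n) ℂ)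
    (hB : B * Bᴴ = Bᴴ * B) :
    rFun A B = ((1/2 : ℝ) * frobSq (A * B - B * A) : ℝ) := by
  have hAstar : hsInner (B * Aᴴ - Aᴴ * B) (B * Aᴴ) = -hsInner (B * A - A * B) (A * B) :=
    trace_commutator_conjTranspose_of_normal A B hB
  rw [rFun, hAstar, ← sub_eq_add_neg, ← hsInner_sub_right, hsInner_self, ← neg_sub, frobSq_neg]
  push_cast
  ring
end

section
/- For all 2×2 complex matrices A and B and all q ∈ ℝ, f(A,B;q) ≤ c(q)‖A‖²‖B‖², where c(q) = ((1+q) + √(2(1+q²)))/2. -/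
open Matrix Complex BigOperators

/-!
Write `A = a₀ + a·σ` and `B = b₀ + b·σ` in the Pauli basis. Since `σⱼσₖ = δⱼₖ + i εⱼₖₗ σₗ`,
`[B,A] = 2i (b × a)·σ`, so with `w = b × a` and `v = a₀ b + b₀ a` one gets
`f(A,B;q) = 4((1+q)‖w‖² + (1-q) Im⟨w,v⟩)` and `‖A‖²‖B‖² = 4(‖w‖² + ‖v‖² + |ā₀b₀ - ⟨a,b⟩|²)`.
Cauchy–Schwarz bounds `Im⟨w,v⟩` by `‖w‖‖v‖`, and `c(q)` is the largest eigenvalue of the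
quadratic form `(1+q)x² + |1-q|xy`.
-/

open scoped InnerProductSpace ComplexConjugate

/-- `x₀ • 1 + x 0 • σ₁ + x 1 • σ₂ + x 2 • σ₃` for the Pauli matrices `σ₁, σ₂, σ₃`. -/
def pauliMatrix (x₀ : ℂ) (x : EuclideanSpace ℂ (Fin 3)) : Matrix (Fin 2) (Fin 2) ℂ :=
  !![x₀ + x 2, x 0 - I * x 1; x 0 + I * x 1, x₀ - x 2]

def euclideanCross (x y : EuclideanSpace ℂ (Fin 3)) : EuclideanSpace ℂ (Fin 3) :=
  WithLp.toLp 2 (x.ofLp ⨯₃ y.ofLp)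

theorem exists_pauliMatrix_eq (X : Matrix (Fin 2) (Fin 2) ℂ) :
    ∃ x₀ x, pauliMatrix x₀ x = X := by
  refine ⟨(X 0 0 + X 1 1) / 2,
    !₂[(X 0 1 + X 1 0) / 2, I * (X 0 1 - X 1 0) / 2, (X 0 0 - X 1 1) / 2], ?_⟩
  ext i j
  fin_cases i <;> fin_cases j <;>
    simp only [pauliMatrix, Fin.isValue, Fin.zero_eta, Fin.mk_one, of_apply, cons_val',
      cons_val, cons_val_zero, cons_val_one, cons_val_fin_one, mul_div_assoc', ← mul_assoc,
      I_mul_I] <;>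
    ring

theorem frobSq_pauliMatrix (x₀ : ℂ) (x : EuclideanSpace ℂ (Fin 3)) :
    frobSq (pauliMatrix x₀ x) = 2 * (‖x₀‖ ^ 2 + ‖x‖ ^ 2) := by
  simp only [frobSq, pauliMatrix, EuclideanSpace.norm_sq_eq, Fin.sum_univ_three, Complex.sq_norm,
    trace_fin_two, mul_apply, Fin.sum_univ_two, conjTranspose_apply, Fin.isValue, of_apply,
    cons_val', cons_val_zero, cons_val_fin_one, cons_val_one, RCLike.star_def, add_re, sub_re,
    mul_re, conj_re, I_re, add_im, sub_im, mul_im, conj_im, I_im, normSq_apply]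
  ring

theorem fFun_pauliMatrix (a₀ b₀ : ℂ) (a b : EuclideanSpace ℂ (Fin 3)) (q : ℝ) :
    fFun (pauliMatrix a₀ a) (pauliMatrix b₀ b) q =
      4 * ((1 + q) * ‖euclideanCross b a‖ ^ 2 +
        (1 - q) * (⟪euclideanCross b a, a₀ • b + b₀ • a⟫_ℂ).im) := by
  simp only [fFun, hsInner, pauliMatrix, euclideanCross, EuclideanSpace.norm_sq_eq,
    Fin.sum_univ_three, Complex.sq_norm, PiLp.inner_apply, trace_fin_two, mul_apply,
    Fin.sum_univ_two, conjTranspose_apply, cross_apply, Fin.isValue, of_apply, cons_val',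
    cons_val_zero, cons_val_fin_one, cons_val_one, cons_val, Matrix.sub_apply, Matrix.smul_apply,
    smul_eq_mul, PiLp.add_apply, PiLp.smul_apply, RCLike.inner_apply, star_add, star_sub,
    star_mul', RCLike.star_def, conj_I, map_sub, map_mul, add_re, sub_re, mul_re, neg_re, conj_re,
    I_re, ofReal_re, add_im, sub_im, mul_im, neg_im, conj_im, I_im, ofReal_im, normSq_apply]
  ring

theorem norm_sq_add_norm_sq_mul_norm_sq_add_norm_sq (a₀ b₀ : ℂ) (a b : EuclideanSpace ℂ (Fin 3)) :
    (‖a₀‖ ^ 2 + ‖a‖ ^ 2) * (‖b₀‖ ^ 2 + ‖b‖ ^ 2) =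
      ‖euclideanCross b a‖ ^ 2 + ‖a₀ • b + b₀ • a‖ ^ 2 + ‖conj a₀ * b₀ - ⟪a, b⟫_ℂ‖ ^ 2 := by
  simp only [euclideanCross, EuclideanSpace.norm_sq_eq, Fin.sum_univ_three, Complex.sq_norm,
    PiLp.inner_apply, cross_apply, Fin.isValue, cons_val_zero, cons_val_one, cons_val,
    PiLp.add_apply, PiLp.smul_apply, smul_eq_mul, RCLike.inner_apply, add_re, sub_re, mul_re,
    conj_re, add_im, sub_im, mul_im, conj_im, normSq_apply]
  ring

/-- `(m + √(m² + k²)) / 2` is the largest eigenvalue of the quadratic form `m x² + k x y`. -/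
theorem mul_sq_add_mul_mul_le (m k x y : ℝ) :
    m * x ^ 2 + k * (x * y) ≤ (m + √(m ^ 2 + k ^ 2)) / 2 * (x ^ 2 + y ^ 2) := by
  set u := √(m ^ 2 + k ^ 2)
  have hu : u ^ 2 = m ^ 2 + k ^ 2 := Real.sq_sqrt (by positivity)
  obtain ⟨hmu, -⟩ : -u ≤ m ∧ m ≤ u := abs_le.mp (Real.abs_le_sqrt
    (le_add_of_nonneg_right (sq_nonneg k) : m ^ 2 ≤ m ^ 2 + k ^ 2))
  rcases hmu.lt_or_eq with hpos | hneg
  · nlinarith [sq_nonneg (k * x - (u + m) * y), sq_nonneg x, sq_nonneg y]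
  · have hk : k = 0 :=
      pow_eq_zero_iff two_ne_zero |>.mp (by linear_combination -hu + (m - u) * hneg)
    subst hk
    nlinarith [mul_nonneg (Real.sqrt_nonneg (m ^ 2 + 0 ^ 2) : 0 ≤ u) (sq_nonneg x)]

theorem cq_eq (q : ℝ) : cq q = ((1 + q) + √((1 + q) ^ 2 + |1 - q| ^ 2)) / 2 := by
  rw [cq, sq_abs]
  ring_nf

theorem cq_nonneg (q : ℝ) : 0 ≤ cq q := by
  rw [cq_eq]
  have := Real.abs_le_sqrt (le_add_of_nonneg_right (sq_nonneg |1 - q|) : (1 + q) ^ 2 ≤ _)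
  linarith [neg_abs_le (1 + q)]

theorem f_bound_two_by_two (A B : Matrix (Fin 2) (Fin 2) ℂ) (q : ℝ) :
    fFun A B q ≤ cq q * frobSq A * frobSq B := by
  obtain ⟨a₀, a, rfl⟩ := exists_pauliMatrix_eq A
  obtain ⟨b₀, b, rfl⟩ := exists_pauliMatrix_eq B
  set w := euclideanCross b a
  set v := a₀ • b + b₀ • a
  have hcs : (1 - q) * (⟪w, v⟫_ℂ).im ≤ |1 - q| * (‖w‖ * ‖v‖) :=
    calc (1 - q) * (⟪w, v⟫_ℂ).im ≤ |1 - q| * |(⟪w, v⟫_ℂ).im| := by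
          rw [← abs_mul]; exact le_abs_self _
      _ ≤ |1 - q| * (‖w‖ * ‖v‖) := by
          gcongr; exact (abs_im_le_norm _).trans (norm_inner_le_norm w v)
  rw [fFun_pauliMatrix, frobSq_pauliMatrix, frobSq_pauliMatrix]
  calc 4 * ((1 + q) * ‖w‖ ^ 2 + (1 - q) * (⟪w, v⟫_ℂ).im)
      ≤ 4 * ((1 + q) * ‖w‖ ^ 2 + |1 - q| * (‖w‖ * ‖v‖)) := by gcongr
    _ ≤ 4 * (cq q * (‖w‖ ^ 2 + ‖v‖ ^ 2)) := by
          gcongr; rw [cq_eq]; exact mul_sq_add_mul_mul_le _ _ _ _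
    _ ≤ 4 * (cq q * (‖w‖ ^ 2 + ‖v‖ ^ 2 + ‖conj a₀ * b₀ - ⟪a, b⟫_ℂ‖ ^ 2)) := by
          have := cq_nonneg q
          gcongr 4 * (cq q * ?_)
          exact le_add_of_nonneg_right (sq_nonneg _)
    _ = cq q * (2 * (‖a₀‖ ^ 2 + ‖a‖ ^ 2)) * (2 * (‖b₀‖ ^ 2 + ‖b‖ ^ 2)) := by
          linear_combination
            (-4 * cq q) * norm_sq_add_norm_sq_mul_norm_sq_add_norm_sq a₀ b₀ a b
end

section
/- For each n ≥ 2 and each q ∈ ℝ, the bound f(A,B;q) ≤ c(q)‖A‖²‖B‖² is sharp: with c = c(q) and ε₁ = sign (+1 if q ≥ −1, −1 otherwise), the matrices A with A₁₁ = √(c−1), A₂₂ = −ε₁√(c−q), all other entries zero, and B with B₁₂ = 1, all other entries zero, satisfy f(A,B;q) = c(q)‖A‖²‖B‖². -/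
open Matrix Complex BigOperators

/-!
For diagonal `A = diag(a, d, 0, …)` and the matrix unit `B = E₀₁`, both `[B, A]` and `[B, A]_q`
are multiples of `E₀₁`, namely `(d - a) E₀₁` and `(d - q a) E₀₁`, so `f(A, B; q) = (d - a)(d - q a)`
while `‖A‖² = a² + d²` and `‖B‖² = 1`. Take `a² = c - 1` and `d² = c - q`; since
`(c - 1)(c - q) = ((1 + q) / 2)²`, the sign `ε₁` makes `a d = -(1 + q) / 2`. The identity
`(d - a)(d - q a) = c (a² + d²)` then reduces to `c² - (1 + q) c = ((1 - q) / 2)²`, the quadratic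
equation of which `c(q)` is the larger root.
-/

section cq
variable (q : ℝ)

theorem abs_one_sub_le_sqrt : |1 - q| ≤ Real.sqrt (2 * (1 + q ^ 2)) :=
  Real.abs_le_sqrt (by nlinarith [sq_nonneg (1 + q)])

theorem one_le_cq : 1 ≤ cq q := by
  have := abs_one_sub_le_sqrt q
  rw [cq]; linarith [le_abs_self (1 - q)]

theorem le_cq : q ≤ cq q := by
  have := abs_one_sub_le_sqrt q
  rw [cq]; linarith [neg_abs_le (1 - q)]

theorem cq_sq_sub : cq q ^ 2 - (1 + q) * cq q = ((1 - q) / 2) ^ 2 := by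
  have hs : Real.sqrt (2 * (1 + q ^ 2)) ^ 2 = 2 * (1 + q ^ 2) := Real.sq_sqrt (by positivity)
  rw [cq]; linear_combination hs / 4

theorem cq_sub_one_mul_cq_sub : (cq q - 1) * (cq q - q) = ((1 + q) / 2) ^ 2 := by
  linear_combination cq_sq_sub q

theorem sqrt_cq_sub_one_mul_sqrt_cq_sub : √(cq q - 1) * √(cq q - q) = |1 + q| / 2 := by
  rw [← Real.sqrt_mul (sub_nonneg.mpr (one_le_cq q)), cq_sub_one_mul_cq_sub, Real.sqrt_sq_eq_abs,
    abs_div, abs_two]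

end cq

theorem sub_mul_sub_eq_cq_mul {q a d : ℝ} (ha : a ^ 2 = cq q - 1) (hd : d ^ 2 = cq q - q)
    (had : a * d = -(1 + q) / 2) : (d - a) * (d - q * a) = cq q * (a ^ 2 + d ^ 2) := by
  linear_combination (q - cq q) * ha + (1 - cq q) * hd - (1 + q) * had - 2 * cq_sq_sub q

namespace Matrix

variable {n α : Type*} [DecidableEq n]

theorem single_sub [AddGroup α] (i j : n) (x y : α) :
    single i j (x - y) = single i j x - single i j y := by
  ext a b
  simp only [sub_apply, single_apply]
  split_ifs <;> simp

variable [Fintype n] [NonUnitalNonAssocSemiring α]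

theorem diagonal_mul_single (v : n → α) (i j : n) (x : α) :
    diagonal v * single i j x = single i j (v i * x) := by
  ext a b
  rw [diagonal_mul, single_apply, single_apply]
  split_ifs <;> simp_all

theorem single_mul_diagonal (v : n → α) (i j : n) (x : α) :
    single i j x * diagonal v = single i j (x * v j) := by
  ext a b
  rw [mul_diagonal, single_apply, single_apply]
  split_ifs <;> simp_all

end Matrix

section HilbertSchmidt

variable {n : ℕ}

theorem hsInner_single_single (i j : Fin n) (x y : ℂ) :
    hsInner (single i j x) (single i j y) = star x * y := by
  rw [hsInner, conjTranspose_single, single_mul_single_same, trace_single_eq_same]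

theorem frobSq_single (i j : Fin n) (x : ℂ) : frobSq (single i j x) = normSq x := by
  rw [frobSq, ← hsInner, hsInner_single_single, star_def, ← normSq_eq_conj_mul_self, ofReal_re]

theorem frobSq_diagonal (v : Fin n → ℂ) : frobSq (diagonal v) = ∑ i, normSq (v i) := by
  simp [frobSq, diagonal_mul_diagonal, trace_diagonal, re_sum, normSq_apply]

theorem fFun_diagonal_single (v : Fin n → ℂ) (i j : Fin n) (x : ℂ) (q : ℝ) :
    fFun (diagonal v) (single i j x) q =
      normSq x * (star (v j - v i) * (v j - q * v i)).re := by
  rw [fFun, diagonal_mul_single, single_mul_diagonal, smul_single, ← single_sub, ← single_sub,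
    hsInner_single_single]
  have : star (x * v j - v i * x) * (x * v j - (q : ℂ) • (v i * x)) =
      (normSq x : ℂ) * (star (v j - v i) * (v j - q * v i)) := by
    rw [normSq_eq_conj_mul_self, smul_eq_mul, star_def]
    simp only [map_sub, map_mul]
    ring
  rw [this, re_ofReal_mul]

end HilbertSchmidt

section Extremal

variable {n : ℕ}

def diagPair (n : ℕ) (x y : ℝ) : Matrix (Fin n) (Fin n) ℂ :=
  of fun i j => if (i : ℕ) = 0 ∧ (j : ℕ) = 0 then (x : ℂ)
    else if (i : ℕ) = 1 ∧ (j : ℕ) = 1 then (y : ℂ) else 0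

def singleZeroOne (n : ℕ) : Matrix (Fin n) (Fin n) ℂ :=
  of fun i j => if (i : ℕ) = 0 ∧ (j : ℕ) = 1 then 1 else 0

def pairVec (n : ℕ) (x y : ℝ) : Fin n → ℝ :=
  fun i => if (i : ℕ) = 0 then x else if (i : ℕ) = 1 then y else 0

theorem diagPair_eq_diagonal (x y : ℝ) :
    diagPair n x y = diagonal fun i => (pairVec n x y i : ℂ) := by
  ext i j
  by_cases hij : i = j
  · subst hij
    simp only [diagPair, pairVec, of_apply, diagonal_apply_eq, and_self]
    split_ifs <;> rfl
  · have : (i : ℕ) ≠ j := fun h => hij (Fin.ext h)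
    simp only [diagPair, of_apply, diagonal_apply_ne _ hij]
    split_ifs <;> first | rfl | omega

theorem singleZeroOne_eq_single (hn : 2 ≤ n) :
    singleZeroOne n = single ⟨0, by omega⟩ ⟨1, by omega⟩ 1 := by
  ext i j
  simp only [singleZeroOne, of_apply, single_apply, Fin.ext_iff, eq_comm]

theorem sum_pairVec_sq (hn : 2 ≤ n) (x y : ℝ) : ∑ i, pairVec n x y i ^ 2 = x ^ 2 + y ^ 2 := by
  rw [Fintype.sum_eq_add ⟨0, by omega⟩ ⟨1, by omega⟩ (by simp [Fin.ext_iff])]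
  · simp [pairVec]
  · rintro i ⟨h₀, h₁⟩
    simp only [ne_eq, Fin.ext_iff] at h₀ h₁
    simp [pairVec, h₀, h₁]

theorem fFun_diagPair_singleZeroOne (hn : 2 ≤ n) (x y q : ℝ) :
    fFun (diagPair n x y) (singleZeroOne n) q = (y - x) * (y - q * x) := by
  rw [diagPair_eq_diagonal, singleZeroOne_eq_single hn, fFun_diagonal_single]
  simp [pairVec]

theorem frobSq_diagPair (hn : 2 ≤ n) (x y : ℝ) : frobSq (diagPair n x y) = x ^ 2 + y ^ 2 := by
  rw [diagPair_eq_diagonal, frobSq_diagonal, ← sum_pairVec_sq hn]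
  simp [sq]

theorem frobSq_singleZeroOne (hn : 2 ≤ n) : frobSq (singleZeroOne n) = 1 := by
  rw [singleZeroOne_eq_single hn, frobSq_single, map_one]

end Extremal

theorem f_bound_sharp (n : ℕ) (hn : 2 ≤ n) (q : ℝ) :
    let c := cq q
    let ε₁ : ℝ := if q ≥ -1 then 1 else -1
    let A : Matrix (Fin n) (Fin n) ℂ := Matrix.of fun i j =>
      if (i : ℕ) = 0 ∧ (j : ℕ) = 0 then ((Real.sqrt (c - 1) : ℝ) : ℂ)
      else if (i : ℕ) = 1 ∧ (j : ℕ) = 1 then ((-(ε₁ * Real.sqrt (c - q)) : ℝ) : ℂ)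
      else 0
    let B : Matrix (Fin n) (Fin n) ℂ := Matrix.of fun i j =>
      if (i : ℕ) = 0 ∧ (j : ℕ) = 1 then 1 else 0
    fFun A B q = cq q * frobSq A * frobSq B := by
  intro c ε₁ A B
  have hε : ε₁ * |1 + q| = 1 + q ∧ ε₁ ^ 2 = 1 := by
    by_cases hq : q ≥ -1
    · simp [ε₁, hq, abs_of_nonneg (neg_le_iff_add_nonneg'.mp hq)]
    · simp [ε₁, hq, abs_of_neg (show 1 + q < 0 by linarith)]
  have ha : √(c - 1) ^ 2 = c - 1 := Real.sq_sqrt (sub_nonneg.mpr (one_le_cq q))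
  have hd : (-(ε₁ * √(c - q))) ^ 2 = c - q := by
    rw [neg_sq, mul_pow, Real.sq_sqrt (sub_nonneg.mpr (le_cq q)), hε.2, one_mul]
  have had : √(c - 1) * -(ε₁ * √(c - q)) = -(1 + q) / 2 := by
    linear_combination (-ε₁) * sqrt_cq_sub_one_mul_sqrt_cq_sub q - hε.1 / 2
  change fFun (diagPair n _ _) (singleZeroOne n) q =
    cq q * frobSq (diagPair n _ _) * frobSq (singleZeroOne n)
  rw [fFun_diagPair_singleZeroOne hn, frobSq_diagPair hn, frobSq_singleZeroOne hn, mul_one]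
  exact sub_mul_sub_eq_cq_mul ha hd had
end
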